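/- arXiv:1711.02878 — 6 statements merged into one kernel-verified Lean document; each statement's English description precedes it below -/
import Mathlib

section
/- Let λ ∈ [0,1], e > 0, and reals R_0, R_1 with 0 < R_0 ≤ R_1. Fix reals b and m with 0 ≤ m ≤ R_1, and fix ρ ∈ (0,1). Define R^H(ρ) = log₂(ρ + (1−ρ)·2^{R_1}) and R^L(ρ) = log₂(ρ + (1−ρ)·2^{R_0}). Suppose k : ℝ × ℝ → ℝ is antitone in its second argument (i.e., m₁ ≤ m₂ implies k(x, m₂) ≤ k(x, m₁) for all x), and suppose k(b−1+ρ·e, R_1) = k(b−1, R_1). Then 1 + λ·k(b−1, R_1) + (1−λ)·k(b−1, min(m+R_0, R_1)) ≤ 1 + λ·k(b−1+ρ·e, min(m+R^H(ρ), R_1)) + (1−λ)·k(b−1, min(m+R^L(ρ), R_1)). -/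
lemma log_aux {ρ R : ℝ} (hρ0 : 0 < ρ) (hρ1 : ρ < 1) (hR : 0 < R) :
    Real.logb 2 (ρ + (1 - ρ) * (2 : ℝ) ^ R) ≤ R := by
  have h2R : (1:ℝ) ≤ (2:ℝ) ^ R :=
    Real.one_le_rpow (by norm_num) hR.le
  have hle : ρ + (1 - ρ) * (2 : ℝ) ^ R ≤ (2:ℝ) ^ R := by nlinarith
  calc Real.logb 2 (ρ + (1 - ρ) * (2 : ℝ) ^ R)
      ≤ Real.logb 2 ((2:ℝ) ^ R) :=
        Real.logb_le_logb_of_le (by norm_num) (by nlinarith) hle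
    _ = R := Real.logb_rpow (by norm_num) (by norm_num)

/-- Theorem 1 of the paper: a no-splitting policy achieves a mean time to
absorption never worse than any splitting policy. -/
theorem no_split_not_worse_than_split
    (lam : ℝ) (hlam0 : 0 ≤ lam) (hlam1 : lam ≤ 1)
    (e : ℝ) (he : 0 < e)
    (R0 R1 : ℝ) (hR0 : 0 < R0) (hR01 : R0 ≤ R1)
    (b m : ℝ) (hm0 : 0 ≤ m) (hm1 : m ≤ R1)
    (ρ : ℝ) (hρ0 : 0 < ρ) (hρ1 : ρ < 1)
    (k : ℝ → ℝ → ℝ)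
    (hanti : ∀ x m₁ m₂ : ℝ, m₁ ≤ m₂ → k x m₂ ≤ k x m₁)
    (hkeq : k (b - 1 + ρ * e) R1 = k (b - 1) R1) :
    1 + lam * k (b - 1) R1 + (1 - lam) * k (b - 1) (min (m + R0) R1) ≤
      1 + lam * k (b - 1 + ρ * e) (min (m + Real.logb 2 (ρ + (1 - ρ) * (2 : ℝ) ^ R1)) R1)
        + (1 - lam) * k (b - 1) (min (m + Real.logb 2 (ρ + (1 - ρ) * (2 : ℝ) ^ R0)) R1) := by
  have hH : min (m + Real.logb 2 (ρ + (1 - ρ) * (2 : ℝ) ^ R1)) R1 ≤ R1 := min_le_right _ _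
  have h1 : k (b - 1) R1 ≤ k (b - 1 + ρ * e) (min (m + Real.logb 2 (ρ + (1 - ρ) * (2 : ℝ) ^ R1)) R1) := by
    rw [← hkeq]; exact hanti _ _ _ hH
  have hL : min (m + Real.logb 2 (ρ + (1 - ρ) * (2 : ℝ) ^ R0)) R1 ≤ min (m + R0) R1 :=
    min_le_min (by linarith [log_aux hρ0 hρ1 hR0]) le_rfl
  have h2 := hanti (b - 1) _ _ hL
  nlinarith
end

section
/- Let λ ∈ (0,1), let e ≥ 1, E_d ≥ 1, R_1 ≥ 1 be natural numbers, and suppose k : ℕ × ℕ → ℝ satisfies: (a) k(b, R_1) = 0 for all b ≥ E_d; (b) k(b, R_1) = 1/λ + k(b+e, R_1) for all b < E_d; (c) k(0, m) = 1/λ + k(e, m) for all m < R_1; (d) k(b, m) = min(1 + λ·k(b−1, R_1) + (1−λ)·k(b−1, m+1), 1/λ + k(b+e, m)) for all b ≥ 1 and m < R_1; and (e) k is antitone in its second argument: m₁ ≤ m₂ ≤ R_1 implies k(b, m₂) ≤ k(b, m₁). Then for every j with 1 ≤ j ≤ R_1: (i) k(E_d + j, R_1 − j) = ∑_{i=1}^{j}(1−λ)^{i−1};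 (ii) at state (E_d + j, R_1 − j) the first argument of the min in (d) is strictly smaller than the second; and (iii) k(b, R_1 − j) = k(E_d + j, R_1 − j) for every b ≥ E_d + j. -/
/-- Theorem 2 of the paper: at states `(E_d + j, R_1 − j)` the
information-accumulation action is strictly optimal, with closed-form minimum
mean time to absorption, which is constant in the battery beyond `E_d + j`. -/
theorem optimal_policy_above_diagonal
    (lam : ℝ) (hlam0 : 0 < lam) (hlam1 : lam < 1)
    (e Ed R1 : ℕ) (he : 1 ≤ e) (hEd : 1 ≤ Ed) (hR1 : 1 ≤ R1)
    (k : ℕ → ℕ → ℝ)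
    (habs : ∀ b : ℕ, Ed ≤ b → k b R1 = 0)
    (hfull : ∀ b : ℕ, b < Ed → k b R1 = 1 / lam + k (b + e) R1)
    (hzero : ∀ m : ℕ, m < R1 → k 0 m = 1 / lam + k e m)
    (hbell : ∀ b m : ℕ, 1 ≤ b → m < R1 →
      k b m = min (1 + lam * k (b - 1) R1 + (1 - lam) * k (b - 1) (m + 1))
                  (1 / lam + k (b + e) m))
    (hanti : ∀ b m₁ m₂ : ℕ, m₁ ≤ m₂ → m₂ ≤ R1 → k b m₂ ≤ k b m₁) :
    ∀ j : ℕ, 1 ≤ j → j ≤ R1 →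
      (k (Ed + j) (R1 - j) = ∑ i ∈ Finset.Icc 1 j, (1 - lam) ^ (i - 1)) ∧
      (1 + lam * k (Ed + j - 1) R1 + (1 - lam) * k (Ed + j - 1) (R1 - j + 1) <
        1 / lam + k (Ed + j + e) (R1 - j)) ∧
      (∀ b : ℕ, Ed + j ≤ b → k b (R1 - j) = k (Ed + j) (R1 - j)) := by
  have hl1 : (0:ℝ) ≤ 1 - lam := by linarith
  set G : ℕ → ℝ := fun j => ∑ i ∈ Finset.range j, (1 - lam) ^ i with hG
  have hGI : ∀ j : ℕ, ∑ i ∈ Finset.Icc 1 j, (1 - lam) ^ (i - 1) = G j := by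
    intro j
    induction j with
    | zero => simp [hG]
    | succ n ih =>
      rw [Finset.sum_Icc_succ_top (by omega : 1 ≤ n + 1), ih]
      simp only [hG, Finset.sum_range_succ, Nat.add_sub_cancel]
  have hGnn : ∀ j, 0 ≤ G j := fun j =>
    Finset.sum_nonneg fun i _ => pow_nonneg hl1 i
  have hGrec : ∀ j, G (j + 1) = 1 + (1 - lam) * G j := by
    intro j
    simp only [hG]
    rw [geom_sum_succ]
    ring
  have hinv : 1 < 1 / lam := one_lt_one_div hlam0 hlam1
  -- key induction
  have key : ∀ j : ℕ, j ≤ R1 → ∀ b : ℕ, Ed + j ≤ b → k b (R1 - j) = G j := by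
    intro j
    induction j with
    | zero =>
      intro _ b hb
      simp only [Nat.sub_zero]
      rw [habs b (by omega)]
      simp [hG]
    | succ n ih =>
      intro hjR b hb
      have hb1 : 1 ≤ b := by omega
      have hm : R1 - (n + 1) < R1 := by omega
      rw [hbell b (R1 - (n + 1)) hb1 hm]
      have hidx : R1 - (n + 1) + 1 = R1 - n := by omega
      rw [hidx]
      have h1 : k (b - 1) R1 = 0 := habs _ (by omega)
      have h2 : k (b - 1) (R1 - n) = G n := ih (by omega) _ (by omega)
      have h3 : k (b + e) (R1 - n) = G n := ih (by omega) _ (by omega)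
      have h4 : k (b + e) (R1 - n) ≤ k (b + e) (R1 - (n + 1)) :=
        hanti _ _ _ (by omega) (by omega)
      have hA : 1 + lam * k (b - 1) R1 + (1 - lam) * k (b - 1) (R1 - n)
          = G (n + 1) := by rw [h1, h2, hGrec]; ring
      rw [hA]
      have hle : G (n + 1) ≤ 1 / lam + k (b + e) (R1 - (n + 1)) := by
        have := hGnn n
        have : G (n + 1) ≤ 1 / lam + G n := by
          rw [hGrec]
          nlinarith
        linarith [h3 ▸ h4, this]
      exact min_eq_left hle
  intro j hj1 hjR
  have hk1 : k (Ed + j) (R1 - j) = G j := key j hjR _ le_rfl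
  refine ⟨by rw [hk1, hGI], ?_, ?_⟩
  · have h1 : k (Ed + j - 1) R1 = 0 := habs _ (by omega)
    have hidx : R1 - j + 1 = R1 - (j - 1) := by omega
    have h2 : k (Ed + j - 1) (R1 - (j - 1)) = G (j - 1) :=
      key (j - 1) (by omega) _ (by omega)
    have h3 : k (Ed + j + e) (R1 - j) = G j := key j hjR _ (by omega)
    have hGj : G j = 1 + (1 - lam) * G (j - 1) := by
      have h := hGrec (j - 1)
      rwa [show j - 1 + 1 = j by omega] at h
    rw [h1, hidx, h2, h3]
    have hl : 0 < 1 / lam := by positivity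
    nlinarith [hGnn j]
  · intro b hb
    rw [key j hjR b hb, hk1]
end

section
/- Let λ₀ ∈ (0,1], λ₁ ∈ [0,1], let e > 0, and let E_d ≥ 1 be a natural number. Suppose k₀, k₁ : ℝ → ℝ satisfy k₁(b) = 0 for every real b ≥ E_d, and for every real b < E_d: k₀(b) = 1 + λ₀·k₁(b+e) + (1−λ₀)·k₀(b) and k₁(b) = 1 + λ₁·k₁(b+e) + (1−λ₁)·k₀(b). Then for every natural number i ≥ 1 and every real b with E_d − i·e ≤ b < E_d − (i−1)·e: k₁(b) = i·(1 + λ₀ − λ₁)/λ₀ and k₀(b) = 1/λ₀ + (i−1)·(1 + λ₀ − λ₁)/λ₀. -/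
/-- Lemma 2 of the paper: closed form of the mean time to absorption with full
mutual information over a time-correlated two-state channel. -/
theorem mean_time_to_absorption_full_info_correlated
    (lam0 : ℝ) (hlam00 : 0 < lam0) (hlam01 : lam0 ≤ 1)
    (lam1 : ℝ) (hlam10 : 0 ≤ lam1) (hlam11 : lam1 ≤ 1)
    (e : ℝ) (he : 0 < e)
    (Ed : ℕ) (hEd : 1 ≤ Ed)
    (k0 k1 : ℝ → ℝ)
    (habs : ∀ b : ℝ, (Ed : ℝ) ≤ b → k1 b = 0)
    (hrec0 : ∀ b : ℝ, b < (Ed : ℝ) →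
      k0 b = 1 + lam0 * k1 (b + e) + (1 - lam0) * k0 b)
    (hrec1 : ∀ b : ℝ, b < (Ed : ℝ) →
      k1 b = 1 + lam1 * k1 (b + e) + (1 - lam1) * k0 b) :
    ∀ i : ℕ, 1 ≤ i → ∀ b : ℝ,
      (Ed : ℝ) - i * e ≤ b → b < (Ed : ℝ) - ((i : ℝ) - 1) * e →
      k1 b = (i : ℝ) * (1 + lam0 - lam1) / lam0 ∧
      k0 b = 1 / lam0 + ((i : ℝ) - 1) * (1 + lam0 - lam1) / lam0 := by
  intro i hi
  induction i, hi using Nat.le_induction with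
  | base =>
    intro b hb1 hb2
    have hblt : b < (Ed : ℝ) := by push_cast at hb2; linarith
    have hke : k1 (b + e) = 0 := by
      apply habs
      push_cast at hb1; linarith
    have h0 := hrec0 b hblt
    rw [hke] at h0
    have hk0 : k0 b = 1 / lam0 := by
      field_simp at h0 ⊢; nlinarith [h0]
    have h1 := hrec1 b hblt
    rw [hke, hk0] at h1
    constructor
    · rw [h1]; field_simp; ring
    · rw [hk0]; push_cast; field_simp; ring
  | succ i hi IH =>
    intro b hb1 hb2
    push_cast at hb1 hb2
    have hie : 1 * e ≤ (i : ℝ) * e := by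
      apply mul_le_mul_of_nonneg_right _ he.le
      exact_mod_cast hi
    have hblt : b < (Ed : ℝ) := by linarith
    have hIH := IH (b + e) (by push_cast; linarith) (by push_cast; linarith)
    obtain ⟨hk1e, _⟩ := hIH
    have h0 := hrec0 b hblt
    rw [hk1e] at h0
    have hk0 : k0 b = 1 / lam0 + ((i : ℝ) + 1 - 1) * (1 + lam0 - lam1) / lam0 := by
      have hne := hlam00.ne'
      field_simp at h0 ⊢
      nlinarith [h0]
    have h1 := hrec1 b hblt
    rw [hk1e, hk0] at h1
    constructor
    · rw [h1]; push_cast; field_simp; ring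
    · rw [hk0]; push_cast; ring
end

section
/- Let λ ∈ (0,1] and let E_d ≥ 1 be a natural number. Suppose h : ℕ → ℝ satisfies h(E_d + 1) = 1 and, for every b with 1 ≤ b ≤ E_d, h(b) = min(1 + (E_d − b + 1)/λ, 1/λ + h(b+1)). Then for every b with 1 ≤ b ≤ E_d: 1 + (E_d − b + 1)/λ = 1/λ + h(b+1), and consequently h(b) = 1 + (E_d − b + 1)/λ. -/
/-- Appendix F of the paper: at states `(b, R_1 − 1)` with `1 ≤ b ≤ E_d`, the
information-accumulation action and the harvesting action achieve the same mean
time to absorption. -/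
theorem both_actions_equal_one_missing_bit
    (lam : ℝ) (hlam0 : 0 < lam) (hlam1 : lam ≤ 1)
    (Ed : ℕ) (hEd : 1 ≤ Ed)
    (h : ℕ → ℝ)
    (htop : h (Ed + 1) = 1)
    (hrec : ∀ b : ℕ, 1 ≤ b → b ≤ Ed →
      h b = min (1 + ((Ed : ℝ) - b + 1) / lam) (1 / lam + h (b + 1))) :
    ∀ b : ℕ, 1 ≤ b → b ≤ Ed →
      (1 + ((Ed : ℝ) - b + 1) / lam = 1 / lam + h (b + 1)) ∧
      h b = 1 + ((Ed : ℝ) - b + 1) / lam := by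
  have hl : lam ≠ 0 := ne_of_gt hlam0
  have key : ∀ d b : ℕ, b + d = Ed → 1 ≤ b →
      (1 + ((Ed : ℝ) - b + 1) / lam = 1 / lam + h (b + 1)) ∧
      h b = 1 + ((Ed : ℝ) - b + 1) / lam := by
    intro d
    induction d with
    | zero =>
      intro b hb h1
      simp at hb
      subst hb
      have heq : 1 + ((b : ℝ) - b + 1) / lam = 1 / lam + h (b + 1) := by
        rw [htop]; ring_nf
      refine ⟨heq, ?_⟩
      rw [hrec b h1 le_rfl, ← heq, min_self]
    | succ n ih =>
      intro b hb h1
      have hb1 : b + 1 + n = Ed := by omega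
      have ih' := ih (b + 1) hb1 (by omega)
      have heq : 1 + ((Ed : ℝ) - b + 1) / lam = 1 / lam + h (b + 1) := by
        rw [ih'.2]
        push_cast
        field_simp
        ring
      refine ⟨heq, ?_⟩
      rw [hrec b h1 (by omega), ← heq, min_self]
  intro b h1 h2
  exact key (Ed - b) b (by omega) h1
end

section
/- Let λ ∈ (0,1), let E_d ≥ 1 and R_1 ≥ 1 be natural numbers, and suppose k : ℕ × ℕ → ℝ satisfies: (a) k(b, R_1) = 0 for all b ≥ E_d; (b) k(b, R_1) = 1/λ + k(b+1, R_1) for all b < E_d; (c) k(0, m) = 1/λ + k(1, m) for all m < R_1; (d) k(b, m) = min(1 + λ·k(b−1, R_1) + (1−λ)·k(b−1, m+1), 1/λ + k(b+1, m)) for all b ≥ 1 and m < R_1; (e) k is antitone in its second argument (m₁ ≤ m₂ ≤ R_1 implies k(b, m₂) ≤ k(b, m₁)); and (f) k is antitone in its first argument (b₁ ≤ b₂ implies k(b₂, m) ≤ k(b₁, m)). Then for every b ≥ E_d + 1 and every m with 0 ≤ m ≤ R_1 − 1: 1 + λ·k(b−1, R_1) + (1−λ)·k(b−1, m+1) < 1/λ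 + k(b+1, m); in particular the minimum in (d) is attained by the information-accumulation branch at all such states. -/
/-- Part 2 of Theorem 3 of the paper: when the battery exceeds the decoding
cost, the information-accumulation branch of the Bellman equation is strictly
smaller than the harvesting branch. -/
theorem info_branch_strictly_optimal_above_Ed
    (lam : ℝ) (hlam0 : 0 < lam) (hlam1 : lam < 1)
    (Ed R1 : ℕ) (hEd : 1 ≤ Ed) (hR1 : 1 ≤ R1)
    (k : ℕ → ℕ → ℝ)
    (habs : ∀ b : ℕ, Ed ≤ b → k b R1 = 0)
    (hfull : ∀ b : ℕ, b < Ed → k b R1 = 1 / lam + k (b + 1) R1)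
    (hzero : ∀ m : ℕ, m < R1 → k 0 m = 1 / lam + k 1 m)
    (hbell : ∀ b m : ℕ, 1 ≤ b → m < R1 →
      k b m = min (1 + lam * k (b - 1) R1 + (1 - lam) * k (b - 1) (m + 1))
                  (1 / lam + k (b + 1) m))
    (hantiM : ∀ b m₁ m₂ : ℕ, m₁ ≤ m₂ → m₂ ≤ R1 → k b m₂ ≤ k b m₁)
    (hantiB : ∀ b₁ b₂ m : ℕ, b₁ ≤ b₂ → k b₂ m ≤ k b₁ m) :
    ∀ b m : ℕ, Ed + 1 ≤ b → m ≤ R1 - 1 →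
      1 + lam * k (b - 1) R1 + (1 - lam) * k (b - 1) (m + 1) <
        1 / lam + k (b + 1) m := by
  have hlamne : lam ≠ 0 := ne_of_gt hlam0
  have h1l : (0:ℝ) ≤ 1 - lam := by linarith
  -- nonnegativity of k for m ≤ R1, b ≥ Ed
  have hk0 : ∀ b m : ℕ, Ed ≤ b → m ≤ R1 → 0 ≤ k b m := by
    intro b m hb hm
    have h := hantiM b m R1 hm le_rfl
    rw [habs b hb] at h
    exact h
  -- one-step battery lemma
  have hstep : ∀ b m : ℕ, Ed ≤ b → m ≤ R1 → k b m ≤ 1 / lam + k (b + 1) m := by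
    intro b m hb hm
    rcases eq_or_lt_of_le hm with h | h
    · subst h
      rw [habs b hb, habs (b+1) (by omega)]
      positivity
    · have h1b : 1 ≤ b := le_trans hEd hb
      rw [hbell b m h1b h]
      exact min_le_right _ _
  -- upper bound for large battery
  have hub : ∀ j b m : ℕ, m + j = R1 → Ed + j ≤ b →
      k b m ≤ 1 / lam - (1 - lam)^j / lam := by
    intro j
    induction j with
    | zero =>
      intro b m hmj hb
      have hm : m = R1 := by omega
      subst hm
      rw [habs b (by omega)]
      simp
    | succ j ih =>
      intro b m hmj hb
      have h1b : 1 ≤ b := by omega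
      have hm : m < R1 := by omega
      have h1 : k b m ≤ 1 + lam * k (b-1) R1 + (1-lam) * k (b-1) (m+1) := by
        rw [hbell b m h1b hm]; exact min_le_left _ _
      rw [habs (b-1) (by omega)] at h1
      have h2 : k (b-1) (m+1) ≤ 1/lam - (1-lam)^j/lam :=
        ih (b-1) (m+1) (by omega) (by omega)
      have h3 : (1-lam) * k (b-1) (m+1) ≤ (1-lam) * (1/lam - (1-lam)^j/lam) :=
        mul_le_mul_of_nonneg_left h2 h1l
      have he : 1 + (1-lam) * (1/lam - (1-lam)^j/lam)
          = 1/lam - (1-lam)^(j+1)/lam := by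
        field_simp; ring
      linarith
  intro b m hb hm
  have hmR : m < R1 := by omega
  have key : ∀ d b : ℕ, Ed + 1 ≤ b → Ed + 1 + (R1 - m) ≤ b + d →
      1 + lam * k (b - 1) R1 + (1 - lam) * k (b - 1) (m + 1) <
        1 / lam + k (b + 1) m := by
    intro d
    induction d with
    | zero =>
      intro b hb1 hb2
      rw [habs (b-1) (by omega)]
      have h2 : k (b-1) (m+1) ≤ 1/lam - (1-lam)^(R1-(m+1))/lam :=
        hub (R1-(m+1)) (b-1) (m+1) (by omega) (by omega)
      have h3 : (1-lam) * k (b-1) (m+1) ≤ (1-lam) * (1/lam - (1-lam)^(R1-(m+1))/lam) :=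
        mul_le_mul_of_nonneg_left h2 h1l
      have he : 1 + (1-lam) * (1/lam - (1-lam)^(R1-(m+1))/lam)
          = 1/lam - (1-lam)^(R1-(m+1)+1)/lam := by
        field_simp; ring
      have hpow : 0 < (1-lam)^(R1-(m+1)+1) / lam := div_pos (pow_pos (by linarith) _) hlam0
      have hk : 0 ≤ k (b+1) m := hk0 (b+1) m (by omega) hmR.le
      linarith
    | succ d ih =>
      intro b hb1 hb2
      have hnext := ih (b+1) (by omega) (by omega)
      simp only [Nat.add_sub_cancel] at hnext
      have hkb1 : k (b+1) m = 1 + lam * k b R1 + (1-lam) * k b (m+1) := by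
        rw [hbell (b+1) m (by omega) hmR]
        simp only [Nat.add_sub_cancel]
        apply min_eq_left
        exact le_of_lt hnext
      have hstep1 : k (b-1) (m+1) ≤ 1/lam + k b (m+1) := by
        have h := hstep (b-1) (m+1) (by omega) (by omega)
        rwa [Nat.sub_add_cancel (by omega : 1 ≤ b)] at h
      rw [habs (b-1) (by omega)]
      rw [habs b (by omega)] at hkb1
      have h3 : (1-lam) * k (b-1) (m+1) ≤ (1-lam) * (1/lam + k b (m+1)) :=
        mul_le_mul_of_nonneg_left hstep1 h1l
      have h4 : (1-lam) * (1/lam) < 1 * (1/lam) :=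
        mul_lt_mul_of_pos_right (by linarith) (by positivity)
      nlinarith [h3, h4, hkb1]
  exact key (Ed + 1 + (R1 - m)) b hb (by omega)
end

section
/- Let λ ∈ (0,1), let E_d ≥ 1 and R_1 ≥ 1 be natural numbers, and suppose k : ℕ × ℕ → ℝ satisfies: (a) k(b, R_1) = 0 for all b ≥ E_d; (b) k(b, R_1) = 1/λ + k(b+1, R_1) for all b < E_d; (c) k(0, m) = 1/λ + k(1, m) for all m < R_1; (d) k(b, m) = min(1 + λ·k(b−1, R_1) + (1−λ)·k(b−1, m+1), 1/λ + k(b+1, m)) for all b ≥ 1 and m < R_1; (e) k is antitone in its second argument (m₁ ≤ m₂ ≤ R_1 implies k(b, m₂) ≤ k(b, m₁)); and (f) k is antitone in its first argument (b₁ ≤ b₂ implies k(b₂, m) ≤ k(b₁, m)). Then for every b with 1 ≤ b ≤ E_d and every m with 0 ≤ m ≤ R_1 − 1: 1 + λ·k(b−1, R_1) + (1−λ)·k(b−1, m+1) = 1/λ + k(b+1, m); i.e., the two branches of the min in (d) are equal at all such states. -/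
/-- Part 3 of Theorem 3 of the paper: for intermediate battery levels
`1 ≤ b ≤ E_d`, the two branches of the Bellman equation are equal, so both
actions are optimal. -/
theorem both_branches_equal_intermediate_battery
    (lam : ℝ) (hlam0 : 0 < lam) (hlam1 : lam < 1)
    (Ed R1 : ℕ) (hEd : 1 ≤ Ed) (hR1 : 1 ≤ R1)
    (k : ℕ → ℕ → ℝ)
    (habs : ∀ b : ℕ, Ed ≤ b → k b R1 = 0)
    (hfull : ∀ b : ℕ, b < Ed → k b R1 = 1 / lam + k (b + 1) R1)
    (hzero : ∀ m : ℕ, m < R1 → k 0 m = 1 / lam + k 1 m)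
    (hbell : ∀ b m : ℕ, 1 ≤ b → m < R1 →
      k b m = min (1 + lam * k (b - 1) R1 + (1 - lam) * k (b - 1) (m + 1))
                  (1 / lam + k (b + 1) m))
    (hantiM : ∀ b m₁ m₂ : ℕ, m₁ ≤ m₂ → m₂ ≤ R1 → k b m₂ ≤ k b m₁)
    (hantiB : ∀ b₁ b₂ m : ℕ, b₁ ≤ b₂ → k b₂ m ≤ k b₁ m) :
    ∀ b m : ℕ, 1 ≤ b → b ≤ Ed → m ≤ R1 - 1 →
      1 + lam * k (b - 1) R1 + (1 - lam) * k (b - 1) (m + 1) =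
        1 / lam + k (b + 1) m := by
  have hne : lam ≠ 0 := ne_of_gt hlam0
  have h1l : (0:ℝ) ≤ 1 - lam := by linarith
  -- Bellman without natural subtraction
  have hbell' : ∀ b m : ℕ, m < R1 →
      k (b + 1) m = min (1 + lam * k b R1 + (1 - lam) * k b (m + 1))
                        (1 / lam + k (b + 1 + 1) m) := by
    intro b m hm
    have h := hbell (b + 1) m (by omega) hm
    simpa only [Nat.add_sub_cancel] using h
  -- nonnegativity
  have hN : ∀ b m : ℕ, m ≤ R1 → 0 ≤ k b m := by
    intro b m hm
    have h1 : k b R1 ≤ k b m := hantiM b m R1 hm le_rfl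
    have h2 : k (max b Ed) R1 ≤ k b R1 := hantiB b (max b Ed) R1 (le_max_left _ _)
    have h3 : k (max b Ed) R1 = 0 := habs _ (le_max_right _ _)
    linarith
  -- the chain inequality: harvesting can cost at most 1/lam
  have hC : ∀ b m : ℕ, m ≤ R1 → k b m ≤ 1 / lam + k (b + 1) m := by
    intro b m hm
    rcases lt_or_eq_of_le hm with hm' | rfl
    · match b with
      | 0 => exact (hzero m hm').le
      | Nat.succ c =>
        rw [hbell' c m hm']
        exact min_le_right _ _
    · rcases lt_or_ge b Ed with h | h
      · exact (hfull b h).le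
      · rw [habs b h, habs (b + 1) (h.trans (Nat.le_succ b))]
        positivity
  -- upper bound for large battery levels
  have hU : ∀ n m : ℕ, m + n = R1 → ∀ b : ℕ, Ed + n ≤ b →
      k b m ≤ (1 - (1 - lam) ^ n) / lam := by
    intro n
    induction n with
    | zero =>
      intro m hm b hb
      have hm' : m = R1 := by omega
      subst hm'
      rw [habs b (by omega)]
      simp
    | succ n ih =>
      intro m hm b hb
      have hm' : m < R1 := by omega
      obtain ⟨c, rfl⟩ : ∃ c, b = c + 1 := ⟨b - 1, by omega⟩
      have h1 : k (c + 1) m ≤ 1 + lam * k c R1 + (1 - lam) * k c (m + 1) := by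
        rw [hbell' c m hm']; exact min_le_left _ _
      rw [habs c (by omega)] at h1
      have h2 : k c (m + 1) ≤ (1 - (1 - lam) ^ n) / lam := ih (m + 1) (by omega) c (by omega)
      have h3 : (1 - lam) * k c (m + 1) ≤ (1 - lam) * ((1 - (1 - lam) ^ n) / lam) :=
        mul_le_mul_of_nonneg_left h2 h1l
      have h4 : 1 + lam * 0 + (1 - lam) * ((1 - (1 - lam) ^ n) / lam)
          = (1 - (1 - lam) ^ (n + 1)) / lam := by
        field_simp
        ring
      linarith
  -- base case of the transmit-optimality lemma: very large battery
  have hMbase : ∀ m n : ℕ, m + n = R1 → 1 ≤ n → ∀ c : ℕ, Ed + n ≤ c + 1 →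
      1 + lam * k c R1 + (1 - lam) * k c (m + 1) ≤ 1 / lam + k (c + 1 + 1) m := by
    intro m n hmn hn c hb
    have hm' : m < R1 := by omega
    by_contra hcon
    push_neg at hcon
    have hkb : k (c + 1) m = 1 / lam + k (c + 1 + 1) m := by
      rw [hbell' c m hm']
      exact min_eq_right hcon.le
    have hub : k (c + 1) m ≤ (1 - (1 - lam) ^ n) / lam := hU n m hmn (c + 1) hb
    have hpos : (0:ℝ) < (1 - lam) ^ n := pow_pos (by linarith) n
    have hn0 : 0 ≤ k (c + 1 + 1) m := hN _ _ hm'.le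
    have key : 1 / lam ≤ (1 - (1 - lam) ^ n) / lam := by linarith
    rw [div_le_div_iff₀ hlam0 hlam0] at key
    nlinarith [mul_pos hpos hlam0]
  -- transmit is optimal at battery levels above Ed
  have hM : ∀ m n : ℕ, m + n = R1 → 1 ≤ n → ∀ j c : ℕ, Ed ≤ c → Ed + n ≤ c + 1 + j →
      1 + lam * k c R1 + (1 - lam) * k c (m + 1) ≤ 1 / lam + k (c + 1 + 1) m := by
    intro m n hmn hn j
    induction j with
    | zero =>
      intro c hc hbig
      exact hMbase m n hmn hn c (by omega)
    | succ j ih =>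
      intro c hc hbig
      have hm' : m < R1 := by omega
      by_cases hb : Ed + n ≤ c + 1
      · exact hMbase m n hmn hn c hb
      · have ih' := ih (c + 1) (by omega) (by omega)
        have hk2 : k (c + 1 + 1) m
            = 1 + lam * k (c + 1) R1 + (1 - lam) * k (c + 1) (m + 1) := by
          rw [hbell' (c + 1) m hm']
          exact min_eq_left ih'
        rw [habs c hc] at *
        rw [habs (c + 1) (by omega)] at hk2
        have hch : k c (m + 1) ≤ 1 / lam + k (c + 1) (m + 1) := hC c (m + 1) (by omega)
        have hd0 : k (c + 1) (m + 1) ≤ k c (m + 1) := hantiB c (c + 1) (m + 1) (by omega)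
        have hl1 : 0 < 1 / lam := by positivity
        nlinarith [mul_nonneg hlam0.le (sub_nonneg.mpr hd0)]
  -- core downward induction on battery, given the harvest identity one level up
  have core : ∀ m : ℕ, m < R1 →
      (∀ c : ℕ, c < Ed → k c (m + 1) = 1 / lam + k (c + 1) (m + 1)) →
      ∀ i b : ℕ, 1 ≤ b → b + i = Ed →
      1 + lam * k (b - 1) R1 + (1 - lam) * k (b - 1) (m + 1) = 1 / lam + k (b + 1) m := by
    intro m hm hstep2 i
    induction i with
    | zero =>
      intro b hb1 hbEd
      obtain ⟨c, rfl⟩ : ∃ c, b = c + 1 := ⟨b - 1, by omega⟩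
      simp only [Nat.add_sub_cancel]
      have s1 : k c R1 = 1 / lam + k (c + 1) R1 := hfull c (by omega)
      have s2 : k c (m + 1) = 1 / lam + k (c + 1) (m + 1) := hstep2 c (by omega)
      have s3 : k (c + 1 + 1) m
          = 1 + lam * k (c + 1) R1 + (1 - lam) * k (c + 1) (m + 1) := by
        rw [hbell' (c + 1) m hm]
        exact min_eq_left (hM m (R1 - m) (by omega) (by omega) (Ed + R1) (c + 1) (by omega)
          (by omega))
      rw [s1, s2, s3]
      field_simp
      ring
    | succ i ih =>
      intro b hb1 hbEd
      obtain ⟨c, rfl⟩ : ∃ c, b = c + 1 := ⟨b - 1, by omega⟩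
      simp only [Nat.add_sub_cancel]
      have s1 : k c R1 = 1 / lam + k (c + 1) R1 := hfull c (by omega)
      have s2 : k c (m + 1) = 1 / lam + k (c + 1) (m + 1) := hstep2 c (by omega)
      have e := ih (c + 1 + 1) (by omega) (by omega)
      simp only [Nat.add_sub_cancel] at e
      have s3 : k (c + 1 + 1) m
          = 1 + lam * k (c + 1) R1 + (1 - lam) * k (c + 1) (m + 1) := by
        rw [hbell' (c + 1) m hm, e, min_self]
      rw [s1, s2, s3]
      field_simp
      ring
  -- main statement by downward induction on the information level
  have main : ∀ n m : ℕ, m + n + 1 = R1 → ∀ i b : ℕ, 1 ≤ b → b + i = Ed →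
      1 + lam * k (b - 1) R1 + (1 - lam) * k (b - 1) (m + 1) = 1 / lam + k (b + 1) m := by
    intro n
    induction n with
    | zero =>
      intro m hm
      have hm1 : m + 1 = R1 := by omega
      refine core m (by omega) (fun c hc => ?_)
      rw [hm1]
      exact hfull c hc
    | succ n ih =>
      intro m hm
      refine core m (by omega) (fun c hc => ?_)
      match c with
      | 0 => exact hzero (m + 1) (by omega)
      | Nat.succ c' =>
        have e := ih (m + 1) (by omega) (Ed - (c' + 1)) (c' + 1) (by omega) (by omega)
        rw [hbell (c' + 1) (m + 1) (by omega) (by omega), e, min_self]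
  intro b m hb1 hb2 hm
  exact main (R1 - 1 - m) m (by omega) (Ed - b) b hb1 (by omega)
end
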